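/- arXiv:1506.04282 — 2 statements merged into one kernel-verified Lean document; each statement's English description precedes it below -/
import Mathlib

section
/- Let γ₀ ∈ (1/2, 1), ε₀ ∈ (0, 1 − γ₀), γ := γ₀ + ε₀, and t ∈ ℝ. Then (1 + t)₊^γ ≥ 1 + (γ/γ₀)·((1+t)₊^{γ₀} − 1) + (γ(γ−γ₀)/γ₀²) · ((1+t)₊^{γ₀} − 1)² / (2 + |t|)². -/
open Real Set

/-- For `x ≥ 1` and `q ∈ [0,1]`: `q*(x-1) ≤ x*(x^q - 1)`. -/
private lemma pow_lb {x q : ℝ} (hx : 1 ≤ x) (hq0 : 0 ≤ q) (hq1 : q ≤ 1) :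
    q * (x - 1) ≤ x * (x ^ q - 1) := by
  have hx0 : (0:ℝ) < x := lt_of_lt_of_le one_pos hx
  have hA : 0 < x ^ q := Real.rpow_pos_of_pos hx0 q
  have hA1 : 1 ≤ x ^ q := Real.one_le_rpow hx hq0
  have hB : (1 + (x⁻¹ - 1)) ^ q ≤ 1 + q * (x⁻¹ - 1) :=
    rpow_one_add_le_one_add_mul_self (by
      have := inv_nonneg.2 hx0.le; linarith) hq0 hq1
  rw [show (1:ℝ) + (x⁻¹ - 1) = x⁻¹ by ring, Real.inv_rpow hx0.le] at hB
  have h2 : 1 ≤ (1 + q * (x⁻¹ - 1)) * x ^ q := by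
    have := mul_le_mul_of_nonneg_right hB hA.le
    rwa [inv_mul_cancel₀ (ne_of_gt hA)] at this
  have h3 : x ≤ (x + q * (1 - x)) * x ^ q := by
    have h := mul_le_mul_of_nonneg_left h2 hx0.le
    have h4 : x * ((1 + q * (x⁻¹ - 1)) * x ^ q) = (x + q * (1 - x)) * x ^ q := by
      field_simp
    rw [h4, mul_one] at h
    exact h
  have h5 : q * (x - 1) ≤ q * (x - 1) * x ^ q :=
    le_mul_of_one_le_right (by nlinarith) hA1
  nlinarith [h3, h5]

private lemma key {p M r : ℝ} (hp1 : 1 < p) (hp2 : p < 2) (hM : 2 ≤ M) (hr0 : 0 ≤ r)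
    (hrM : r ≤ M - 1) :
    1 + p * (r - 1) + p * (p - 1) / M ^ 2 * (r - 1) ^ 2 ≤ r ^ p := by
  have hM0 : (0:ℝ) < M := by linarith
  have hM2 : (0:ℝ) < M ^ 2 := by positivity
  set K : ℝ := p * (p - 1) / M ^ 2 with hKdef
  have hK0 : 0 ≤ K := div_nonneg (by nlinarith) (by positivity)
  have hKM : K * M ^ 2 = p * (p - 1) := div_mul_cancel₀ _ (ne_of_gt hM2)
  set f : ℝ → ℝ := fun s => s ^ p - (1 + p * (s - 1) + K * (s - 1) ^ 2) with hfdef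
  have hf1 : f 1 = 0 := by simp [hfdef]
  have hderiv : ∀ s : ℝ, s ≠ 0 →
      HasDerivAt f (p * s ^ (p - 1) - (p + K * (2 * (s - 1)))) s := by
    intro s hs
    have h1 : HasDerivAt (fun u : ℝ => u - 1) 1 s := (hasDerivAt_id s).sub_const 1
    have hpoly : HasDerivAt (fun u : ℝ => 1 + p * (u - 1) + K * (u - 1) ^ 2)
        (p + K * (2 * (s - 1))) s := by
      have h2 : HasDerivAt (fun u : ℝ => 1 + p * (u - 1)) p s := by
        simpa using (h1.const_mul p).const_add 1
      have h3 : HasDerivAt (fun u : ℝ => K * (u - 1) ^ 2) (K * (2 * (s - 1))) s := by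
        have := (h1.pow 2).const_mul K
        simpa using this
      exact h2.add h3
    exact (Real.hasDerivAt_rpow_const (Or.inl hs)).sub hpoly
  have hgoal : 0 ≤ f r := by
    rcases le_total 1 r with hr1 | hr1
    · -- monotone on [1, M-1]
      have hmono : MonotoneOn f (Icc 1 (M - 1)) := by
        apply monotoneOn_of_deriv_nonneg (convex_Icc _ _)
        · intro x hx
          have hx0 : x ≠ 0 := by rcases hx with ⟨h, _⟩; positivity
          exact ((hderiv x hx0).continuousAt).continuousWithinAt
        · intro x hx
          rw [interior_Icc] at hx
          have hx0 : x ≠ 0 := by rcases hx with ⟨h, _⟩; positivity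
          exact ((hderiv x hx0).differentiableAt).differentiableWithinAt
        · intro x hx
          rw [interior_Icc] at hx
          obtain ⟨hx1, hxM⟩ := hx
          have hx0 : (0:ℝ) < x := by linarith
          rw [(hderiv x (ne_of_gt hx0)).deriv]
          have h6 : (p - 1) * (x - 1) ≤ x * (x ^ (p - 1) - 1) :=
            pow_lb hx1.le (by linarith) (by linarith)
          have h6p := mul_le_mul_of_nonneg_left h6 (by linarith : (0:ℝ) ≤ p)
          have hc : 0 ≤ K * (x - 1) * (M ^ 2 - 2 * x) := by
            apply mul_nonneg (mul_nonneg hK0 (by linarith))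
            nlinarith
          have hKM2 : K * M ^ 2 * (x - 1) = p * (p - 1) * (x - 1) := by rw [hKM]
          have hAx : 1 ≤ x ^ (p - 1) := Real.one_le_rpow hx1.le (by linarith)
          have hmul : (p + K * (2 * (x - 1))) * x ≤ p * x ^ (p - 1) * x := by nlinarith
          nlinarith [le_of_mul_le_mul_right hmul hx0]
      have hr_mem : r ∈ Icc 1 (M - 1) := ⟨hr1, hrM⟩
      have h1_mem : (1:ℝ) ∈ Icc 1 (M - 1) := ⟨le_refl _, by linarith⟩
      have := hmono h1_mem hr_mem hr1
      rwa [hf1] at this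
    · -- antitone on [0, 1]
      have hanti : AntitoneOn f (Icc 0 1) := by
        apply antitoneOn_of_deriv_nonpos (convex_Icc _ _)
        · intro x hx
          rcases eq_or_lt_of_le hx.1 with h0 | h0
          · -- x = 0 : use continuity of rpow at 0
            have hc1 : ContinuousAt (fun s : ℝ => s ^ p) x :=
              Real.continuousAt_rpow_const x p (Or.inr (by linarith))
            have hc2 : Continuous fun s : ℝ => 1 + p * (s - 1) + K * (s - 1) ^ 2 := by
              continuity
            exact (hc1.sub hc2.continuousAt).continuousWithinAt
          · exact ((hderiv x (ne_of_gt h0)).continuousAt).continuousWithinAt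
        · intro x hx
          rw [interior_Icc] at hx
          exact ((hderiv x (ne_of_gt hx.1)).differentiableAt).differentiableWithinAt
        · intro x hx
          rw [interior_Icc] at hx
          obtain ⟨hx0, hx1⟩ := hx
          rw [(hderiv x (ne_of_gt hx0)).deriv]
          have hB : (1 + (x - 1)) ^ (p - 1) ≤ 1 + (p - 1) * (x - 1) :=
            rpow_one_add_le_one_add_mul_self (by linarith) (by linarith) (by linarith)
          rw [show (1:ℝ) + (x - 1) = x by ring] at hB
          have hB2 := mul_le_mul_of_nonneg_left hB (by linarith : (0:ℝ) ≤ p)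
          have hKM2 : K * M ^ 2 * (x - 1) = p * (p - 1) * (x - 1) := by rw [hKM]
          have hc2 : K * (1 - x) * (M ^ 2 - 2) ≥ 0 := by
            apply mul_nonneg (mul_nonneg hK0 (by linarith)); nlinarith
          nlinarith
      have hr_mem : r ∈ Icc 0 1 := ⟨hr0, hr1⟩
      have h1_mem : (1:ℝ) ∈ Icc 0 1 := ⟨by norm_num, le_refl _⟩
      have := hanti hr_mem h1_mem hr1
      rwa [hf1] at this
  simp only [hfdef] at hgoal
  linarith

theorem stmt_13 (γ₀ ε₀ γ t : ℝ) (hγ₀ : γ₀ ∈ Set.Ioo (1/2 : ℝ) 1)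
    (hε₀ : ε₀ ∈ Set.Ioo 0 (1 - γ₀)) (hγ : γ = γ₀ + ε₀) :
    max (1 + t) 0 ^ γ ≥
      1 + (γ / γ₀) * (max (1 + t) 0 ^ γ₀ - 1) +
        (γ * (γ - γ₀) / γ₀ ^ 2) * (max (1 + t) 0 ^ γ₀ - 1) ^ 2 / (2 + |t|) ^ 2 := by
  obtain ⟨hγ₀1, hγ₀2⟩ := hγ₀
  obtain ⟨hε₀1, hε₀2⟩ := hε₀
  have hγ₀0 : (0:ℝ) < γ₀ := by linarith
  have hγ₀ne : γ₀ ≠ 0 := ne_of_gt hγ₀0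
  set x : ℝ := max (1 + t) 0 with hxdef
  have hx0 : 0 ≤ x := le_max_right _ _
  set M : ℝ := 2 + |t| with hMdef
  have habs : 0 ≤ |t| := abs_nonneg t
  have hM : 2 ≤ M := by rw [hMdef]; linarith
  have hMne : M ≠ 0 := by intro h; rw [h] at hM; linarith
  have hxM : x ≤ 1 + |t| := max_le (by linarith [le_abs_self t]) (by linarith)
  set r : ℝ := x ^ γ₀ with hrdef
  have hr0 : 0 ≤ r := Real.rpow_nonneg hx0 _
  have hrM : r ≤ M - 1 := by
    have h1 : x ^ γ₀ ≤ (1 + |t|) ^ γ₀ := Real.rpow_le_rpow hx0 hxM hγ₀0.le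
    have h2 : (1 + |t|) ^ γ₀ ≤ (1 + |t|) ^ (1:ℝ) :=
      Real.rpow_le_rpow_of_exponent_le (by linarith) (by linarith)
    rw [Real.rpow_one] at h2
    rw [hrdef, hMdef]
    linarith
  have hp1 : 1 < γ / γ₀ := (one_lt_div hγ₀0).2 (by linarith)
  have hp2 : γ / γ₀ < 2 := (div_lt_iff₀ hγ₀0).2 (by linarith)
  have hxγ : x ^ γ = r ^ (γ / γ₀) := by
    rw [hrdef, ← Real.rpow_mul hx0]
    congr 1
    field_simp
  have hkey := key hp1 hp2 hM hr0 hrM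
  have hco : γ * (γ - γ₀) / γ₀ ^ 2 * (r - 1) ^ 2 / M ^ 2
      = γ / γ₀ * (γ / γ₀ - 1) / M ^ 2 * (r - 1) ^ 2 := by
    rw [div_sub_one hγ₀ne, div_mul_div_comm, div_div, div_mul_eq_mul_div, div_div]
    ring
  rw [ge_iff_le, hxγ, hco]
  exact hkey
end

section
/- Let n ≥ 1, s ∈ (0, 1/2), Ω ⊆ ℝ^n open, and let E, F ⊆ ℝ^n be measurable sets with Per_s(E, Ω) < ∞ and Per_s(F, Ω) < ∞. Then Per_s(E ∩ F, Ω) + Per_s(E ∪ F, Ω) ≤ Per_s(E, Ω) + Per_s(F, Ω). -/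
open MeasureTheory Set ENNReal

noncomputable def fracInter (n : ℕ) (s : ℝ)
    (F G : Set (EuclideanSpace ℝ (Fin n))) : ℝ≥0∞ :=
  ∫⁻ x in F, ∫⁻ y in G, ENNReal.ofReal (‖x - y‖ ^ (-((n : ℝ) + 2 * s)))

noncomputable def fracPer (n : ℕ) (s : ℝ)
    (E Ω : Set (EuclideanSpace ℝ (Fin n))) : ℝ≥0∞ :=
  fracInter n s (E ∩ Ω) Eᶜ + fracInter n s (Ω \ E) (E \ Ω)

/-! By Tonelli each perimeter is the integral, for the product measure, of the kernel against the
indicator of the pairs `(x, y)` it couples. The claim thus reduces to a pointwise inequality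
between these indicators (submodularity for characteristic functions), checked on the membership
of `x` and `y` in `E`, `F` and `Ω`. -/

noncomputable section

namespace NonlocalPerimeter

variable {α : Type*}

def interaction [MeasurableSpace α] (μ : Measure α) (K : α × α → ℝ≥0∞) (A B : Set α) : ℝ≥0∞ :=
  ∫⁻ x in A, ∫⁻ y in B, K (x, y) ∂μ ∂μ

def perimeter [MeasurableSpace α] (μ : Measure α) (K : α × α → ℝ≥0∞) (E Ω : Set α) : ℝ≥0∞ :=
  interaction μ K (E ∩ Ω) Eᶜ + interaction μ K (Ω \ E) (E \ Ω)

def perimeterDensity (K : α × α → ℝ≥0∞) (E Ω : Set α) : α × α → ℝ≥0∞ :=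
  ((E ∩ Ω) ×ˢ Eᶜ).indicator K + ((Ω \ E) ×ˢ (E \ Ω)).indicator K

theorem perimeterDensity_inter_add_union_le (K : α × α → ℝ≥0∞) (E F Ω : Set α) :
    perimeterDensity K (E ∩ F) Ω + perimeterDensity K (E ∪ F) Ω ≤
      perimeterDensity K E Ω + perimeterDensity K F Ω := by
  rintro ⟨x, y⟩
  by_cases hxE : x ∈ E <;> by_cases hxF : x ∈ F <;> by_cases hxΩ : x ∈ Ω <;>
    by_cases hyE : y ∈ E <;> by_cases hyF : y ∈ F <;> by_cases hyΩ : y ∈ Ω <;>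
    simp [perimeterDensity, hxE, hxF, hxΩ, hyE, hyF, hyΩ]

variable [MeasurableSpace α] {μ : Measure α} [SFinite μ] {K : α × α → ℝ≥0∞}

theorem interaction_eq_lintegral_indicator (hK : Measurable K) {A B : Set α}
    (hA : MeasurableSet A) (hB : MeasurableSet B) :
    interaction μ K A B = ∫⁻ p, (A ×ˢ B).indicator K p ∂μ.prod μ := by
  rw [lintegral_indicator (hA.prod hB), setLIntegral_prod K hK.aemeasurable, interaction]

theorem measurable_perimeterDensity (hK : Measurable K) {E Ω : Set α}
    (hE : MeasurableSet E) (hΩ : MeasurableSet Ω) : Measurable (perimeterDensity K E Ω) :=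
  (hK.indicator ((hE.inter hΩ).prod hE.compl)).add
    (hK.indicator ((hΩ.diff hE).prod (hE.diff hΩ)))

theorem perimeter_eq_lintegral_perimeterDensity (hK : Measurable K) {E Ω : Set α}
    (hE : MeasurableSet E) (hΩ : MeasurableSet Ω) :
    perimeter μ K E Ω = ∫⁻ p, perimeterDensity K E Ω p ∂μ.prod μ := by
  rw [perimeter, interaction_eq_lintegral_indicator hK (hE.inter hΩ) hE.compl,
    interaction_eq_lintegral_indicator hK (hΩ.diff hE) (hE.diff hΩ), perimeterDensity,
    ← lintegral_add_left (hK.indicator ((hE.inter hΩ).prod hE.compl))]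
  rfl

theorem perimeter_inter_add_perimeter_union_le (hK : Measurable K) {E F Ω : Set α}
    (hE : MeasurableSet E) (hF : MeasurableSet F) (hΩ : MeasurableSet Ω) :
    perimeter μ K (E ∩ F) Ω + perimeter μ K (E ∪ F) Ω ≤ perimeter μ K E Ω + perimeter μ K F Ω := by
  simp only [perimeter_eq_lintegral_perimeterDensity hK _ hΩ, hE, hF, hE.inter hF, hE.union hF]
  rw [← lintegral_add_left (measurable_perimeterDensity hK (hE.inter hF) hΩ),
    ← lintegral_add_left (measurable_perimeterDensity hK hE hΩ)]
  exact lintegral_mono (perimeterDensity_inter_add_union_le K E F Ω)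

end NonlocalPerimeter

end

theorem stmt_17_general (n : ℕ) (s : ℝ)
    (Ω : Set (EuclideanSpace ℝ (Fin n))) (hΩ : IsOpen Ω)
    (E F : Set (EuclideanSpace ℝ (Fin n)))
    (hE : MeasurableSet E) (hF : MeasurableSet F) :
    fracPer n s (E ∩ F) Ω + fracPer n s (E ∪ F) Ω ≤
      fracPer n s E Ω + fracPer n s F Ω := by
  have hK : Measurable fun p : EuclideanSpace ℝ (Fin n) × EuclideanSpace ℝ (Fin n) =>
      ENNReal.ofReal (‖p.1 - p.2‖ ^ (-((n : ℝ) + 2 * s))) :=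
    ((measurable_fst.sub measurable_snd).norm.pow_const _).ennreal_ofReal
  -- `fracPer n s` unfolds to `NonlocalPerimeter.perimeter volume` of this kernel.
  exact NonlocalPerimeter.perimeter_inter_add_perimeter_union_le hK hE hF hΩ.measurableSet

theorem stmt_17 (n : ℕ) (hn : 1 ≤ n) (s : ℝ) (hs : s ∈ Set.Ioo (0:ℝ) (1/2))
    (Ω : Set (EuclideanSpace ℝ (Fin n))) (hΩ : IsOpen Ω)
    (E F : Set (EuclideanSpace ℝ (Fin n)))
    (hE : MeasurableSet E) (hF : MeasurableSet F)
    (hEfin : fracPer n s E Ω < ⊤) (hFfin : fracPer n s F Ω < ⊤) :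
    fracPer n s (E ∩ F) Ω + fracPer n s (E ∪ F) Ω ≤
      fracPer n s E Ω + fracPer n s F Ω :=
  stmt_17_general n s Ω hΩ E F hE hF
end
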